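/- arXiv:2302.03115 — 3 statements merged into one kernel-verified Lean document; each statement's English description precedes it below -/
import Mathlib

section
/- Let (x_1,y_1),...,(x_k,y_k) be drawn i.i.d. from D and let α = (1/k)·Σ_{i=1}^k y_i. For any bounded measurable g : X × {0,1} → ℝ^d, define the soft label corrected function g̃(x, α) = (k(α − p) + p)·g(x, 1) + (k(p − α) + (1 − p))·g(x, 0). Then for every index j ∈ [k], E[g̃(x_j, α)] = E_{(x,y)∼D}[g(x, y)], where the expectation on the left is over the bag. -/
/-!
Since `k (α - p) + p = y_j + ∑_{i ≠ j} (y_i - p)`, the corrected function splits as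
`g̃(x_j, α) = g(x_j, y_j) + ∑_{i ≠ j} (y_i - p) • (g(x_j, 1) - g(x_j, 0))`.
For `i ≠ j` the draws `i` and `j` are independent and `E[y_i - p] = 0`, so every cross term
has mean zero, while `(x_j, y_j)` has law `D`.
-/

open MeasureTheory Real

noncomputable section

/-- Real value of a `{0,1}` label encoded as a `Bool`. -/
def bval (b : Bool) : ℝ := if b then 1 else 0

open ProbabilityTheory Finset

lemma bval_smul_add_one_sub_bval_smul {Y E : Type*} [AddCommGroup E] [Module ℝ E]
    (f : Y × Bool → E) (z : Y × Bool) :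
    bval z.2 • f (z.1, true) + (1 - bval z.2) • f (z.1, false) = f z := by
  obtain ⟨y, _ | _⟩ := z <;> simp [bval]

lemma abs_bval_sub_le (b : Bool) (p : ℝ) : |bval b - p| ≤ 1 + |p| :=
  (abs_sub _ _).trans <| by cases b <;> simp [bval]

lemma measurable_bval : Measurable bval := measurable_from_top

lemma integral_bval_snd {Y : Type*} [MeasurableSpace Y] (D : Measure (Y × Bool))
    [IsFiniteMeasure D] :
    ∫ z, bval z.2 ∂D = D.real {z | z.2 = true} := by
  have hind : (fun z : Y × Bool => bval z.2) = {z | z.2 = true}.indicator fun _ => 1 := by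
    ext ⟨y, _ | _⟩ <;> simp [bval]
  have hs : MeasurableSet {z : Y × Bool | z.2 = true} :=
    measurable_snd (measurableSet_singleton true)
  rw [hind, integral_indicator_const _ hs, smul_eq_mul, mul_one]

lemma integral_bval_snd_sub_eq_zero {Y : Type*} [MeasurableSpace Y] (D : Measure (Y × Bool))
    [IsProbabilityMeasure D] :
    ∫ z, (bval z.2 - D.real {z | z.2 = true}) ∂D = 0 := by
  have hint : Integrable (fun z : Y × Bool => bval z.2) D :=
    .of_bound (measurable_bval.comp measurable_snd).aestronglyMeasurable 1
      (ae_of_all _ fun z => by cases z.2 <;> simp [bval])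
  rw [integral_sub hint (integrable_const _), integral_bval_snd, integral_const]
  simp

lemma integral_comp_eval_smul_comp_eval {ι : Type*} [Fintype ι] {Ω : ι → Type*}
    [∀ i, MeasurableSpace (Ω i)] (μ : ∀ i, Measure (Ω i)) [∀ i, IsProbabilityMeasure (μ i)]
    {E : Type*} [NormedAddCommGroup E] [NormedSpace ℝ E] [MeasurableSpace E] [BorelSpace E]
    [SecondCountableTopology E] {i j : ι} (hij : i ≠ j) {f : Ω i → ℝ} {g : Ω j → E}
    (hf : Measurable f) (hg : Measurable g) :
    ∫ ω, f (ω i) • g (ω j) ∂Measure.pi μ = (∫ x, f x ∂μ i) • ∫ y, g y ∂μ j := by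
  have hindep : IndepFun (fun ω : ∀ i, Ω i => f (ω i)) (fun ω => g (ω j)) (Measure.pi μ) :=
    ((iIndepFun_pi (X := fun _ => id) fun _ => aemeasurable_id).indepFun hij).comp hf hg
  rw [hindep.integral_fun_smul_eq_smul_integral
    (hf.comp (measurable_pi_apply i)).aestronglyMeasurable
    (hg.comp (measurable_pi_apply j)).aestronglyMeasurable,
    integral_comp_eval hf.aestronglyMeasurable, integral_comp_eval hg.aestronglyMeasurable]

section CrossTerm

variable {Y : Type*} [MeasurableSpace Y] (D : Measure (Y × Bool))
  {E : Type*} [NormedAddCommGroup E] [NormedSpace ℝ E] {k : ℕ}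

lemma integrable_bval_sub_smul_comp_eval [IsFiniteMeasure D] (p : ℝ) (i j : Fin k)
    {h : Y × Bool → E} (hh : Integrable h D) :
    Integrable (fun ω : Fin k → Y × Bool => (bval (ω i).2 - p) • h (ω j))
      (Measure.pi fun _ => D) := by
  have hhj : Integrable (fun ω : Fin k → Y × Bool => h (ω j)) (Measure.pi fun _ => D) :=
    integrable_comp_eval hh
  exact hhj.bdd_smul (1 + |p|)
    ((measurable_bval.comp measurable_snd).sub_const p |>.comp (measurable_pi_apply i)
      |>.aestronglyMeasurable)
    (ae_of_all _ fun ω => (Real.norm_eq_abs _).trans_le (abs_bval_sub_le _ p))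

lemma integral_bval_sub_smul_comp_eval_eq_zero [IsProbabilityMeasure D] [MeasurableSpace E]
    [BorelSpace E] [SecondCountableTopology E] {i j : Fin k} (hij : i ≠ j) {h : Y × Bool → E}
    (hh : Measurable h) :
    ∫ ω, (bval (ω i).2 - D.real {z | z.2 = true}) • h (ω j) ∂(Measure.pi fun _ => D) = 0 := by
  rw [integral_comp_eval_smul_comp_eval (fun _ => D) hij
    (f := fun z => bval z.2 - D.real {z | z.2 = true})
    ((measurable_bval.comp measurable_snd).sub_const _) hh,
    integral_bval_snd_sub_eq_zero, zero_smul]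

end CrossTerm

lemma soft_label_decomposition {E : Type*} [AddCommGroup E] [Module ℝ E] {k : ℕ} (j : Fin k)
    (c : Fin k → ℝ) (p : ℝ) (u v : E) :
    ((k : ℝ) * ((1 / (k : ℝ)) * ∑ i, c i - p) + p) • u
        + ((k : ℝ) * (p - (1 / (k : ℝ)) * ∑ i, c i) + (1 - p)) • v
      = (c j • u + (1 - c j) • v) + ∑ i ∈ univ.erase j, (c i - p) • (u - v) := by
  have hk : (k : ℝ) ≠ 0 := Nat.cast_ne_zero.mpr j.pos.ne'
  have hcentre : (k : ℝ) * ((1 / (k : ℝ)) * ∑ i, c i - p) = ∑ i, (c i - p) := by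
    rw [sum_sub_distrib, sum_const, card_univ, Fintype.card_fin, nsmul_eq_mul]
    field_simp
  have hsplit := (add_sum_erase univ (fun i => c i - p) (mem_univ j)).symm
  rw [← sum_smul, ← neg_sub _ p, mul_neg, hcentre, hsplit]
  module

theorem stmt_3_general
    {X : Type*} [MeasurableSpace X] {d : ℕ}
    (D : Measure (X × Bool)) [IsProbabilityMeasure D]
    (p : ℝ) (hp : p = (D {z : X × Bool | z.2 = true}).toReal)
    (k : ℕ) (j : Fin k)
    (g : X × Bool → EuclideanSpace ℝ (Fin d)) (hg : Measurable g)
    (M : ℝ) (hgb : ∀ z, ‖g z‖ ≤ M)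
    -- label proportion of the bag
    (α : (Fin k → X × Bool) → ℝ)
    (hα : ∀ ω, α ω = (1 / (k:ℝ)) * ∑ i, bval (ω i).2)
    -- the soft label corrected function
    (gtil : X → ℝ → EuclideanSpace ℝ (Fin d))
    (hgtil : ∀ x a, gtil x a
        = ((k:ℝ) * (a - p) + p) • g (x, true)
          + ((k:ℝ) * (p - a) + (1 - p)) • g (x, false)) :
    ∫ ω, gtil (ω j).1 (α ω) ∂(Measure.pi fun _ : Fin k => D) = ∫ z, g z ∂D := by
  set h : X × Bool → EuclideanSpace ℝ (Fin d) := fun z => g (z.1, true) - g (z.1, false)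
  have hh : Measurable h :=
    (hg.comp (measurable_fst.prodMk measurable_const)).sub
      (hg.comp (measurable_fst.prodMk measurable_const))
  have hdecomp : ∀ ω : Fin k → X × Bool, gtil (ω j).1 (α ω)
      = g (ω j) + ∑ i ∈ univ.erase j, (bval (ω i).2 - p) • h (ω j) := fun ω => by
    rw [hgtil, hα, soft_label_decomposition, bval_smul_add_one_sub_bval_smul]
  have hgD : Integrable g D := .of_bound hg.aestronglyMeasurable M (ae_of_all _ hgb)
  have hhD : Integrable h D := .of_bound hh.aestronglyMeasurable (M + M)
    (ae_of_all _ fun z => (norm_sub_le _ _).trans (add_le_add (hgb _) (hgb _)))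
  have hcross_int := fun i => integrable_bval_sub_smul_comp_eval D p i j hhD
  have hcross : ∀ i ∈ univ.erase j,
      ∫ ω, (bval (ω i).2 - p) • h (ω j) ∂(Measure.pi fun _ => D) = 0 := fun i hi => by
    subst hp
    exact integral_bval_sub_smul_comp_eval_eq_zero D (ne_of_mem_erase hi) hh
  simp_rw [hdecomp]
  rw [integral_add (integrable_comp_eval hgD) (integrable_finsetSum _ fun i _ => hcross_int i),
    integral_finsetSum _ fun i _ => hcross_int i, sum_eq_zero hcross, add_zero,
    integral_comp_eval hg.aestronglyMeasurable]

/-- unbiasedness of the soft label corrected function.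
With `g̃(x,α) = (k(α−p)+p)·g(x,1) + (k(p−α)+(1−p))·g(x,0)` and `α` the label
proportion of a bag of `k` i.i.d. draws from `D`, for every `j ∈ [k]` one has
`E[g̃(x_j, α)] = E_{(x,y)∼D}[g(x,y)]`. -/
theorem stmt_3
    {X : Type*} [MeasurableSpace X] {d : ℕ}
    (D : Measure (X × Bool)) [IsProbabilityMeasure D]
    (p : ℝ) (hp : p = (D {z : X × Bool | z.2 = true}).toReal)
    (k : ℕ) (hk : 1 ≤ k) (j : Fin k)
    (g : X × Bool → EuclideanSpace ℝ (Fin d)) (hg : Measurable g)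
    (M : ℝ) (hgb : ∀ z, ‖g z‖ ≤ M)
    -- label proportion of the bag
    (α : (Fin k → X × Bool) → ℝ)
    (hα : ∀ ω, α ω = (1 / (k:ℝ)) * ∑ i, bval (ω i).2)
    -- the soft label corrected function
    (gtil : X → ℝ → EuclideanSpace ℝ (Fin d))
    (hgtil : ∀ x a, gtil x a
        = ((k:ℝ) * (a - p) + p) • g (x, true)
          + ((k:ℝ) * (p - a) + (1 - p)) • g (x, false)) :
    ∫ ω, gtil (ω j).1 (α ω) ∂(Measure.pi fun _ : Fin k => D) = ∫ z, g z ∂D :=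
  stmt_3_general D p hp k j g hg M hgb α hα gtil hgtil
end
end

section
/- Let (x_1,y_1),...,(x_k,y_k) be drawn i.i.d. from D, let α = (1/k)·Σ_{i=1}^k y_i, and let ỹ_1,...,ỹ_k be drawn, conditionally on the bag, i.i.d. from Bernoulli(α). For any bounded measurable g : X × {0,1} → ℝ^d, with g̃(x, ỹ) = (k(ỹ − p) + p)·g(x, 1) + (k(p − ỹ) + (1 − p))·g(x, 0) and the soft label corrected function g̃(x, α) = (k(α − p) + p)·g(x, 1) + (k(p − α) + (1 − p))·g(x, 0), the following inequality holds: E[ ‖(1/k)·Σ_{j=1}^k g̃(x_j, ỹ_j)‖² ] ≥ E[ ‖(1/k)·Σ_{j=1}^k g̃(x_j, α)‖² ]. -/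
/-!
Conditionally on the bag, each surrogate label `ỹ_j = 1{U_j ≤ α}` has mean `α`, and
`g̃(x, ·)` is affine, so the soft-label average `(1/k) Σ g̃(x_j, α)` is the mean, over the
uniforms `U`, of the hard-label average `Z = (1/k) Σ g̃(x_j, ỹ_j)`. Jensen's inequality
`‖E_U Z‖² ≤ E_U ‖Z‖²` for each bag, integrated over the bag, is the claim.
-/

open MeasureTheory Real

noncomputable section

section

variable {E : Type*} [NormedAddCommGroup E] [NormedSpace ℝ E]

theorem sq_norm_integral_le_integral_sq_norm {Ω : Type*} [MeasurableSpace Ω] (ν : Measure Ω)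
    [IsProbabilityMeasure ν] {f : Ω → E} (hf : MemLp f 2 ν) :
    ‖∫ ω, f ω ∂ν‖ ^ 2 ≤ ∫ ω, ‖f ω‖ ^ 2 ∂ν := by
  have h_var := ProbabilityTheory.variance_nonneg (fun ω => ‖f ω‖) ν
  rw [ProbabilityTheory.variance_eq_sub hf.norm] at h_var
  calc ‖∫ ω, f ω ∂ν‖ ^ 2 ≤ (∫ ω, ‖f ω‖ ∂ν) ^ 2 := by
        gcongr; exact norm_integral_le_integral_norm f
    _ ≤ ∫ ω, ‖f ω‖ ^ 2 ∂ν := by simpa using h_var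

theorem integral_prod_sq_norm_le_of_integral_right_eq {B U : Type*} [MeasurableSpace B]
    [MeasurableSpace U] (μ : Measure B) [IsFiniteMeasure μ] (ν : Measure U)
    [IsProbabilityMeasure ν] {F : B × U → E} (hF : StronglyMeasurable F) {C : ℝ}
    (hFC : ∀ ω, ‖F ω‖ ≤ C) {G : B → E} (hG : ∀ b, ∫ u, F (b, u) ∂ν = G b) :
    ∫ ω, ‖G ω.1‖ ^ 2 ∂μ.prod ν ≤ ∫ ω, ‖F ω‖ ^ 2 ∂μ.prod ν := by
  have hF2 : Integrable (fun ω => ‖F ω‖ ^ 2) (μ.prod ν) :=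
    (MemLp.of_bound hF.aestronglyMeasurable C (.of_forall hFC)).integrable_norm_pow two_ne_zero
  rw [integral_fun_fst (fun b => ‖G b‖ ^ 2), probReal_univ, one_smul, integral_prod _ hF2]
  refine integral_mono_of_nonneg (.of_forall fun b => by positivity) hF2.integral_prod_left
    (.of_forall fun b => ?_)
  dsimp only
  rw [← hG]
  exact sq_norm_integral_le_integral_sq_norm ν <|
    .of_bound (hF.comp_measurable measurable_prodMk_left).aestronglyMeasurable C
      (.of_forall fun u => hFC (b, u))

theorem integrable_lineMap_indicator_one {Ω : Type*} [MeasurableSpace Ω] (ν : Measure Ω)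
    [IsFiniteMeasure ν] {s : Set Ω} (hs : MeasurableSet s) (v w : E) :
    Integrable (fun ω => AffineMap.lineMap v w (s.indicator 1 ω : ℝ)) ν := by
  have h_ind : Integrable (s.indicator (1 : Ω → ℝ)) ν := (integrable_const 1).indicator hs
  simp only [AffineMap.lineMap_apply_module']
  exact (h_ind.smul_const _).add (integrable_const v)

theorem integral_lineMap_indicator_one [CompleteSpace E] {Ω : Type*} [MeasurableSpace Ω]
    (ν : Measure Ω) [IsProbabilityMeasure ν] {s : Set Ω} (hs : MeasurableSet s) (v w : E) :
    ∫ ω, AffineMap.lineMap v w (s.indicator 1 ω : ℝ) ∂ν =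
      AffineMap.lineMap v w (ν.real s) := by
  have h_ind : Integrable (s.indicator (1 : Ω → ℝ)) ν := (integrable_const 1).indicator hs
  simp only [AffineMap.lineMap_apply_module']
  rw [integral_add (h_ind.smul_const _) (integrable_const v), integral_smul_const,
    integral_indicator_one hs, integral_const, probReal_univ, one_smul]

instance isProbabilityMeasure_volume_restrict_Icc_zero_one :
    IsProbabilityMeasure (volume.restrict (Set.Icc (0:ℝ) 1)) :=
  ⟨by simp⟩

theorem measureReal_pi_uniform_le {ι : Type*} [Fintype ι] (j : ι) {a : ℝ}
    (ha : a ∈ Set.Icc (0:ℝ) 1) :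
    (Measure.pi fun _ : ι => volume.restrict (Set.Icc (0:ℝ) 1)).real {u | u j ≤ a} = a := by
  rw [show {u : ι → ℝ | u j ≤ a} = Function.eval j ⁻¹' Set.Iic a from rfl,
    (measurePreserving_eval _ j).measureReal_preimage measurableSet_Iic.nullMeasurableSet,
    measureReal_restrict_apply measurableSet_Iic,
    show Set.Iic a ∩ Set.Icc 0 1 = Set.Icc 0 a by ext; simp; grind]
  simp [ha.1]

theorem integral_sum_indicator_pi_uniform_of_affine [CompleteSpace E] {ι : Type*} [Fintype ι]
    (φ : ι → ℝ → E) (hφ : ∀ j, φ j = AffineMap.lineMap (φ j 0) (φ j 1)) {a : ℝ}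
    (ha : a ∈ Set.Icc (0:ℝ) 1) :
    ∫ u, ∑ j, φ j ({u : ι → ℝ | u j ≤ a}.indicator 1 u)
        ∂(Measure.pi fun _ : ι => volume.restrict (Set.Icc (0:ℝ) 1)) = ∑ j, φ j a := by
  have hs : ∀ j, MeasurableSet {u : ι → ℝ | u j ≤ a} :=
    fun j => measurableSet_le (measurable_pi_apply j) measurable_const
  rw [integral_finsetSum _ fun j _ => hφ j ▸ integrable_lineMap_indicator_one _ (hs j) _ _]
  refine Finset.sum_congr rfl fun j _ => ?_
  rw [hφ j, integral_lineMap_indicator_one _ (hs j), measureReal_pi_uniform_le j ha]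

theorem norm_one_div_smul_sum_le {n : ℕ} {v : Fin n → E} {C : ℝ} (hC : 0 ≤ C)
    (hv : ∀ i, ‖v i‖ ≤ C) : ‖(1 / (n:ℝ)) • ∑ i, v i‖ ≤ C := by
  rcases n.eq_zero_or_pos with rfl | hn
  · simpa using hC
  calc ‖(1 / (n:ℝ)) • ∑ i, v i‖ ≤ 1 / n * (n * C) := by
        rw [norm_smul, Real.norm_of_nonneg (by positivity)]
        gcongr
        simpa using norm_sum_le_of_le Finset.univ fun i _ => hv i
    _ = C := by field_simp

theorem norm_smul_add_smul_le {a b c M : ℝ} {v w : E} (ha : |a| ≤ c) (hb : |b| ≤ c)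
    (hv : ‖v‖ ≤ M) (hw : ‖w‖ ≤ M) : ‖a • v + b • w‖ ≤ 2 * c * M := by
  have hc : 0 ≤ c := (abs_nonneg a).trans ha
  calc ‖a • v + b • w‖ ≤ |a| * ‖v‖ + |b| * ‖w‖ := by
        simpa only [norm_smul, Real.norm_eq_abs] using norm_add_le (a • v) (b • w)
    _ ≤ c * M + c * M := by gcongr
    _ = 2 * c * M := by ring

theorem norm_debiased_le {k p t M : ℝ} (hk : 0 ≤ k) (ht : t ∈ Set.Icc (0:ℝ) 1) {v w : E}
    (hv : ‖v‖ ≤ M) (hw : ‖w‖ ≤ M) :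
    ‖(k * (t - p) + p) • v + (k * (p - t) + (1 - p)) • w‖ ≤
      2 * ((k + 1) * (1 + |p|)) * M := by
  refine norm_smul_add_smul_le (abs_le.2 ⟨?_, ?_⟩) (abs_le.2 ⟨?_, ?_⟩) hv hw <;>
    cases abs_cases p <;> nlinarith [ht.1, ht.2]

end

theorem bval_mem_Icc (y : Bool) : bval y ∈ Set.Icc (0:ℝ) 1 := by
  cases y <;> simp [bval]

theorem one_div_mul_sum_bval_mem_Icc {n : ℕ} (y : Fin n → Bool) :
    1 / (n:ℝ) * ∑ i, bval (y i) ∈ Set.Icc (0:ℝ) 1 := by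
  have hy : ∀ i, ‖bval (y i)‖ ≤ 1 := fun i => by
    rw [Real.norm_of_nonneg (bval_mem_Icc _).1]; exact (bval_mem_Icc _).2
  refine ⟨mul_nonneg (by positivity) (Finset.sum_nonneg fun i _ => (bval_mem_Icc _).1), ?_⟩
  exact (le_abs_self _).trans (by simpa using norm_one_div_smul_sum_le zero_le_one hy)

theorem stmt_4_general
    {X : Type*} [MeasurableSpace X] {d : ℕ}
    (D : Measure (X × Bool)) [IsProbabilityMeasure D]
    (p : ℝ)
    (k : ℕ)
    (g : X × Bool → EuclideanSpace ℝ (Fin d)) (hg : Measurable g)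
    (M : ℝ) (hgb : ∀ z, ‖g z‖ ≤ M)
    -- probability space: the bag together with `k` independent uniform variables
    (P : Measure ((Fin k → X × Bool) × (Fin k → ℝ)))
    (hP : P = (Measure.pi fun _ : Fin k => D).prod
        (Measure.pi fun _ : Fin k => volume.restrict (Set.Icc (0:ℝ) 1)))
    -- label proportion of the bag
    (α : (Fin k → X × Bool) → ℝ)
    (hα : ∀ b, α b = (1 / (k:ℝ)) * ∑ i, bval (b i).2)
    -- surrogate labels, i.i.d. `Bernoulli(α)` given the bag
    (ytil : Fin k → ((Fin k → X × Bool) × (Fin k → ℝ)) → Bool)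
    (hytil : ∀ j ω, ytil j ω = true ↔ ω.2 j ≤ α ω.1)
    -- the debiased / soft label corrected function
    (gtil : X → ℝ → EuclideanSpace ℝ (Fin d))
    (hgtil : ∀ x t, gtil x t
        = ((k:ℝ) * (t - p) + p) • g (x, true)
          + ((k:ℝ) * (p - t) + (1 - p)) • g (x, false)) :
    ∫ ω, ‖(1 / (k:ℝ)) • ∑ j, gtil (ω.1 j).1 (bval (ytil j ω))‖ ^ 2 ∂P
      ≥ ∫ ω, ‖(1 / (k:ℝ)) • ∑ j, gtil (ω.1 j).1 (α ω.1)‖ ^ 2 ∂P := by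
  subst hP
  have hα_mem : ∀ b, α b ∈ Set.Icc (0:ℝ) 1 :=
    fun b => hα b ▸ one_div_mul_sum_bval_mem_Icc _
  have hgtil_meas : Measurable (Function.uncurry gtil) := by
    rw [show Function.uncurry gtil = _ from funext fun q => hgtil q.1 q.2]
    fun_prop
  have hlin : ∀ x, gtil x = AffineMap.lineMap (gtil x 0) (gtil x 1) := fun x => funext fun t => by
    simp only [hgtil, AffineMap.lineMap_apply_module']
    module
  have hy : ∀ j ω, bval (ytil j ω) = {ω : _ × (Fin k → ℝ) | ω.2 j ≤ α ω.1}.indicator 1 ω :=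
    fun j ω => by simp [bval, Set.indicator_apply, hytil]
  have hS : ∀ j, MeasurableSet {ω : _ × (Fin k → ℝ) | ω.2 j ≤ α ω.1} := fun j => by
    have := measurable_of_countable bval
    exact measurableSet_le (by fun_prop) (by rw [funext hα]; fun_prop)
  have hM : 0 ≤ M := (norm_nonneg _).trans (hgb (nonempty_of_isProbabilityMeasure D).some)
  simp only [hy]
  refine integral_prod_sq_norm_le_of_integral_right_eq _ _ ?_ (fun ω => ?_)
    (C := 2 * ((k + 1) * (1 + |p|)) * M)
    (G := fun b => (1 / (k:ℝ)) • ∑ j, gtil (b j).1 (α b)) fun b => ?_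
  · exact Measurable.stronglyMeasurable (by fun_prop (disch := exact hS _))
  · refine norm_one_div_smul_sum_le (by positivity) fun j => ?_
    rw [hgtil]
    exact norm_debiased_le k.cast_nonneg (hy j ω ▸ bval_mem_Icc _) (hgb _) (hgb _)
  · rw [integral_smul]
    exact congrArg _ <| integral_sum_indicator_pi_uniform_of_affine (fun j => gtil (b j).1)
      (fun j => hlin _) (hα_mem b)

/-- Lemma 1, variance reduction by derandomization.
The surrogate labels `ỹ_1,…,ỹ_k` are, conditionally on the bag, i.i.d.
`Bernoulli(α)`, realized as `ỹ_j = 1{U_j ≤ α}` with `U_1,…,U_k` i.i.d. uniform on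
`[0,1]` independent of the bag. With
`g̃(x,t) = (k(t−p)+p)·g(x,1) + (k(p−t)+(1−p))·g(x,0)`,
`E‖(1/k)Σ_j g̃(x_j,ỹ_j)‖² ≥ E‖(1/k)Σ_j g̃(x_j,α)‖²`. -/
theorem stmt_4
    {X : Type*} [MeasurableSpace X] {d : ℕ}
    (D : Measure (X × Bool)) [IsProbabilityMeasure D]
    (p : ℝ) (hp : p = (D {z : X × Bool | z.2 = true}).toReal)
    (k : ℕ) (hk : 1 ≤ k)
    (g : X × Bool → EuclideanSpace ℝ (Fin d)) (hg : Measurable g)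
    (M : ℝ) (hgb : ∀ z, ‖g z‖ ≤ M)
    -- probability space: the bag together with `k` independent uniform variables
    (P : Measure ((Fin k → X × Bool) × (Fin k → ℝ)))
    (hP : P = (Measure.pi fun _ : Fin k => D).prod
        (Measure.pi fun _ : Fin k => volume.restrict (Set.Icc (0:ℝ) 1)))
    -- label proportion of the bag
    (α : (Fin k → X × Bool) → ℝ)
    (hα : ∀ b, α b = (1 / (k:ℝ)) * ∑ i, bval (b i).2)
    -- surrogate labels, i.i.d. `Bernoulli(α)` given the bag
    (ytil : Fin k → ((Fin k → X × Bool) × (Fin k → ℝ)) → Bool)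
    (hytil : ∀ j ω, ytil j ω = true ↔ ω.2 j ≤ α ω.1)
    -- the debiased / soft label corrected function
    (gtil : X → ℝ → EuclideanSpace ℝ (Fin d))
    (hgtil : ∀ x t, gtil x t
        = ((k:ℝ) * (t - p) + p) • g (x, true)
          + ((k:ℝ) * (p - t) + (1 - p)) • g (x, false)) :
    ∫ ω, ‖(1 / (k:ℝ)) • ∑ j, gtil (ω.1 j).1 (bval (ytil j ω))‖ ^ 2 ∂P
      ≥ ∫ ω, ‖(1 / (k:ℝ)) • ∑ j, gtil (ω.1 j).1 (α ω.1)‖ ^ 2 ∂P :=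
  stmt_4_general D p k g hg M hgb P hP α hα ytil hytil gtil hgtil
end
end

section
/- Let (x_1,y_1),...,(x_k,y_k) be drawn i.i.d. from D, let α = (1/k)·Σ_{i=1}^k y_i, let g : X × {0,1} → ℝ^d be bounded measurable, and write g̃_i = g̃(x_i, α) where g̃(x, α) = (k(α − p) + p)·g(x, 1) + (k(p − α) + (1 − p))·g(x, 0). Then for any k ≥ 1 and any j ∈ [k], E[ ‖(1/k)·Σ_{i=1}^k g̃_i‖² ] ≤ E[ ‖g̃_j‖² ]. -/
open MeasureTheory Real

noncomputable section

/-!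
The squared norm is convex, so pointwise `‖(1/k) Σ g̃_i‖² ≤ (1/k) Σ ‖g̃_i‖²`. The label
proportion `α` is a symmetric function of the bag, and the bag is i.i.d., so swapping the
coordinates `i` and `j` preserves the law of the bag and shows that all the `g̃_i` have the same
second moment.
-/

theorem norm_smul_sum_sq_le {ι E : Type*} [Fintype ι] [SeminormedAddCommGroup E]
    [NormedSpace ℝ E] (v : ι → E) :
    ‖(1 / (Fintype.card ι : ℝ)) • ∑ i, v i‖ ^ 2
      ≤ (1 / (Fintype.card ι : ℝ)) * ∑ i, ‖v i‖ ^ 2 := by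
  have hsq : ‖∑ i, v i‖ ^ 2 ≤ Fintype.card ι * ∑ i, ‖v i‖ ^ 2 :=
    (pow_le_pow_left₀ (norm_nonneg _) (norm_sum_le _ _) 2).trans
      (sq_sum_le_card_mul_sum_sq (s := Finset.univ) (f := fun i => ‖v i‖))
  rw [norm_smul, mul_pow, Real.norm_eq_abs, sq_abs]
  rcases (Nat.cast_nonneg (Fintype.card ι) : (0:ℝ) ≤ _).eq_or_lt with h | h
  · simp [← h]
  · calc (1 / (Fintype.card ι : ℝ)) ^ 2 * ‖∑ i, v i‖ ^ 2
        ≤ (1 / (Fintype.card ι : ℝ)) ^ 2 * (Fintype.card ι * ∑ i, ‖v i‖ ^ 2) := by gcongr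
      _ = _ := by field_simp

theorem integral_norm_smul_sum_sq_le {Ω ι E : Type*} [MeasurableSpace Ω] [Fintype ι]
    [NormedAddCommGroup E] [NormedSpace ℝ E] {μ : Measure Ω} {f : ι → Ω → E}
    (hf : ∀ i, MemLp (f i) 2 μ) :
    ∫ ω, ‖(1 / (Fintype.card ι : ℝ)) • ∑ i, f i ω‖ ^ 2 ∂μ
      ≤ (1 / (Fintype.card ι : ℝ)) * ∑ i, ∫ ω, ‖f i ω‖ ^ 2 ∂μ := by
  have hsq : ∀ i, Integrable (fun ω => ‖f i ω‖ ^ 2) μ :=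
    fun i => (hf i).integrable_norm_pow two_ne_zero
  have havg : MemLp (fun ω => (1 / (Fintype.card ι : ℝ)) • ∑ i, f i ω) 2 μ :=
    (memLp_finsetSum _ fun i _ => hf i).const_smul _
  rw [← integral_finsetSum _ fun i _ => hsq i, ← integral_const_mul]
  exact integral_mono (havg.integrable_norm_pow two_ne_zero)
    ((integrable_finsetSum _ fun i _ => hsq i).const_mul _) fun ω => norm_smul_sum_sq_le _

theorem integral_eval_comp_eq_of_perm_invariant {ι β γ E : Type*} [Fintype ι] [DecidableEq ι]
    [MeasurableSpace β] [NormedAddCommGroup E] [NormedSpace ℝ E] (μ : Measure β) [SigmaFinite μ]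
    (G : β → γ → E) {A : (ι → β) → γ} (hA : ∀ (σ : Equiv.Perm ι) ω, A (ω ∘ σ) = A ω) (i j : ι) :
    ∫ ω, G (ω i) (A ω) ∂Measure.pi (fun _ => μ)
      = ∫ ω, G (ω j) (A ω) ∂Measure.pi (fun _ => μ) := by
  have hswap (ω : ι → β) :
      MeasurableEquiv.piCongrLeft (fun _ => β) (Equiv.swap i j) ω = ω ∘ Equiv.swap i j := by
    ext a
    simpa [MeasurableEquiv.coe_piCongrLeft] using
      Equiv.piCongrLeft_apply_apply (P := fun _ => β) (Equiv.swap i j) ω (Equiv.swap i j a)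
  rw [← (measurePreserving_piCongrLeft (fun _ => μ) (Equiv.swap i j)).integral_comp']
  simp [hswap, hA]

theorem bval_nonneg (b : Bool) : 0 ≤ bval b := by cases b <;> simp [bval]

theorem bval_le_one (b : Bool) : bval b ≤ 1 := by cases b <;> simp [bval]

theorem one_div_card_mul_sum_bval_mem_Icc {ι : Type*} [Fintype ι] (f : ι → Bool) :
    (1 / (Fintype.card ι : ℝ)) * ∑ i, bval (f i) ∈ Set.Icc 0 1 := by
  have hsum : ∑ i, bval (f i) ≤ Fintype.card ι := by
    simpa using Finset.sum_le_sum fun i (_ : i ∈ Finset.univ) => bval_le_one (f i)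
  rw [one_div_mul_eq_div]
  exact ⟨div_nonneg (Finset.sum_nonneg fun i _ => bval_nonneg (f i)) (Nat.cast_nonneg _),
    div_le_one_of_le₀ hsum (Nat.cast_nonneg _)⟩

theorem norm_softLabel_le {E : Type*} [SeminormedAddCommGroup E] [NormedSpace ℝ E]
    {k p a M : ℝ} {u v : E} (hk : 0 ≤ k) (ha : a ∈ Set.Icc 0 1) (hu : ‖u‖ ≤ M)
    (hv : ‖v‖ ≤ M) :
    ‖(k * (a - p) + p) • u + (k * (p - a) + (1 - p)) • v‖
      ≤ (2 * (k + (k + 1) * |p|) + 1) * M := by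
  set c := k * (a - p) + p
  have hc : |c| ≤ k + (k + 1) * |p| := by
    obtain ⟨ha₀, ha₁⟩ := ha
    rw [abs_le]
    constructor <;> nlinarith [mul_nonneg hk ha₀, mul_nonneg hk (sub_nonneg.2 ha₁),
      mul_nonneg hk (sub_nonneg.2 (le_abs_self p)),
      mul_nonneg hk (neg_le_iff_add_nonneg.1 (neg_abs_le p)), le_abs_self p, neg_abs_le p]
  have hM : 0 ≤ M := (norm_nonneg u).trans hu
  rw [show k * (p - a) + (1 - p) = 1 - c by ring]
  calc ‖c • u + (1 - c) • v‖ ≤ |c| * M + |1 - c| * M := by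
        refine (norm_add_le _ _).trans ?_
        rw [norm_smul, norm_smul, Real.norm_eq_abs, Real.norm_eq_abs]
        gcongr
    _ ≤ (2 * (k + (k + 1) * |p|) + 1) * M := by
        have : |1 - c| ≤ 1 + |c| := (abs_sub _ _).trans (by rw [abs_one])
        nlinarith

theorem stmt_5_general
    {X : Type*} [MeasurableSpace X] {d : ℕ}
    (D : Measure (X × Bool)) [IsProbabilityMeasure D]
    (p : ℝ)
    (k : ℕ) (j : Fin k)
    (g : X × Bool → EuclideanSpace ℝ (Fin d)) (hg : Measurable g)
    (M : ℝ) (hgb : ∀ z, ‖g z‖ ≤ M)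
    -- label proportion of the bag
    (α : (Fin k → X × Bool) → ℝ)
    (hα : ∀ ω, α ω = (1 / (k:ℝ)) * ∑ i, bval (ω i).2)
    -- the soft label corrected function
    (gtil : X → ℝ → EuclideanSpace ℝ (Fin d))
    (hgtil : ∀ x a, gtil x a
        = ((k:ℝ) * (a - p) + p) • g (x, true)
          + ((k:ℝ) * (p - a) + (1 - p)) • g (x, false)) :
    ∫ ω, ‖(1 / (k:ℝ)) • ∑ i, gtil (ω i).1 (α ω)‖ ^ 2
        ∂(Measure.pi fun _ : Fin k => D)
      ≤ ∫ ω, ‖gtil (ω j).1 (α ω)‖ ^ 2 ∂(Measure.pi fun _ : Fin k => D) := by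
  set P := Measure.pi fun _ : Fin k => D
  have hα_perm (σ : Equiv.Perm (Fin k)) (ω : Fin k → X × Bool) : α (ω ∘ σ) = α ω := by
    simp only [hα, Function.comp_apply, Equiv.sum_comp σ (fun i => bval (ω i).2)]
  have hα_mem (ω : Fin k → X × Bool) : α ω ∈ Set.Icc 0 1 := by
    simpa [hα] using one_div_card_mul_sum_bval_mem_Icc fun i => (ω i).2
  have hα_meas : Measurable α := by
    rw [funext hα]
    have : Measurable bval := .of_discrete
    fun_prop
  have hmemLp (i : Fin k) : MemLp (fun ω => gtil (ω i).1 (α ω)) 2 P := by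
    have hmeas : Measurable fun ω : Fin k → X × Bool => gtil (ω i).1 (α ω) := by
      simp_rw [hgtil]
      fun_prop
    refine MemLp.of_bound hmeas.aestronglyMeasurable ((2 * (k + (k + 1) * |p|) + 1) * M)
      (ae_of_all _ fun ω => ?_)
    rw [hgtil]
    exact norm_softLabel_le k.cast_nonneg (hα_mem ω) (hgb _) (hgb _)
  have hk₀ : (k : ℝ) ≠ 0 := by exact_mod_cast j.pos.ne'
  calc _ ≤ (1 / (k:ℝ)) * ∑ i, ∫ ω, ‖gtil (ω i).1 (α ω)‖ ^ 2 ∂P := by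
        simpa using integral_norm_smul_sum_sq_le hmemLp
    _ = (1 / (k:ℝ)) * ∑ _i : Fin k, ∫ ω, ‖gtil (ω j).1 (α ω)‖ ^ 2 ∂P := by
        congr 1
        exact Finset.sum_congr rfl fun i _ =>
          integral_eval_comp_eq_of_perm_invariant D (fun z a => ‖gtil z.1 a‖ ^ 2) hα_perm i j
    _ = _ := by
        rw [Finset.sum_const, Finset.card_univ, Fintype.card_fin, nsmul_eq_mul]
        field_simp

/-- Lemma: the bag average has smaller second moment than a
single soft-label corrected term. With `g̃_i = g̃(x_i, α)`, for any `k ≥ 1` and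
`j ∈ [k]`, `E‖(1/k)Σ_i g̃_i‖² ≤ E‖g̃_j‖²`. -/
theorem stmt_5
    {X : Type*} [MeasurableSpace X] {d : ℕ}
    (D : Measure (X × Bool)) [IsProbabilityMeasure D]
    (p : ℝ) (hp : p = (D {z : X × Bool | z.2 = true}).toReal)
    (k : ℕ) (hk : 1 ≤ k) (j : Fin k)
    (g : X × Bool → EuclideanSpace ℝ (Fin d)) (hg : Measurable g)
    (M : ℝ) (hgb : ∀ z, ‖g z‖ ≤ M)
    -- label proportion of the bag
    (α : (Fin k → X × Bool) → ℝ)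
    (hα : ∀ ω, α ω = (1 / (k:ℝ)) * ∑ i, bval (ω i).2)
    -- the soft label corrected function
    (gtil : X → ℝ → EuclideanSpace ℝ (Fin d))
    (hgtil : ∀ x a, gtil x a
        = ((k:ℝ) * (a - p) + p) • g (x, true)
          + ((k:ℝ) * (p - a) + (1 - p)) • g (x, false)) :
    ∫ ω, ‖(1 / (k:ℝ)) • ∑ i, gtil (ω i).1 (α ω)‖ ^ 2
        ∂(Measure.pi fun _ : Fin k => D)
      ≤ ∫ ω, ‖gtil (ω j).1 (α ω)‖ ^ 2 ∂(Measure.pi fun _ : Fin k => D) :=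
  stmt_5_general D p k j g hg M hgb α hα gtil hgtil
end
end
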